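/- Let c > 0 and λ ∈ ℝ. Suppose w_B : [0, x_B*) → ℝ is differentiable with w_B′(x) = f_λ^c(w_B(x)), w_B(0) = 0, where 0 < x_B* < ∞ and w_B(x) → +∞ as x → x_B* from the left; and suppose w_F : [0, x_F*) → ℝ is differentiable with w_F′(x) = f_λ^{−c}(w_F(x)), w_F(0) = 0, where 0 < x_F* < ∞ and w_F(x) → +∞ as x → x_F* from the left. Then the blow-up times satisfy the strict inequality x_F* > x_B*. -/

import Mathlib

/-!
Suppose `x_F* ≤ x_B*`. Since `f_λ^{-c} < f_λ^c` pointwise, comparison gives `w_F < w_B` on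
`(0, x_F*)`. Pick `x₁` with `w_F(x₁) > 0`; then `w_B` takes the value `w_F(x₁)` at some `x₂ < x₁`,
and because the equation is autonomous the translate `w_B(· − (x₁ − x₂))` solves it with the same
value at `x₁`. Comparison keeps `w_F` below this translate, which is continuous up to `x_F*`
because `x_F* − (x₁ − x₂) < x_B*`; so `w_F` stays bounded and cannot blow up at `x_F*`.
-/

open Set Filter Topology

/-- The right-hand side f_λ^c(z) of the traveling-wave ODE:
f_λ^c(z) = (c/√(1+z²) − Φ(c/√(1+z²)) + λ)·(1+z²)^{3/2}. -/
noncomputable def fODE (Φ : ℝ → ℝ) (c lam z : ℝ) : ℝ :=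
  (c / Real.sqrt (1 + z ^ 2) - Φ (c / Real.sqrt (1 + z ^ 2)) + lam) *
    (1 + z ^ 2) ^ ((3 : ℝ) / 2)

lemma strictMono_sub_of_contraction {Φ : ℝ → ℝ} {J : ℝ} (hJ1 : J < 1)
    (hΦlip : ∀ a b : ℝ, |Φ a - Φ b| ≤ J * |a - b|) :
    StrictMono fun V => V - Φ V := by
  intro a b hab
  have hlip : Φ b - Φ a ≤ J * (b - a) := by
    simpa [abs_of_pos (sub_pos.2 hab)] using (abs_le.1 (hΦlip b a)).2
  have : J * (b - a) < b - a := mul_lt_of_lt_one_left (sub_pos.2 hab) hJ1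
  dsimp only
  linarith

lemma strictMono_fODE {Φ : ℝ → ℝ} {J : ℝ} (hJ1 : J < 1)
    (hΦlip : ∀ a b : ℝ, |Φ a - Φ b| ≤ J * |a - b|) (lam z : ℝ) :
    StrictMono fun c => fODE Φ c lam z := by
  have hpos : (0 : ℝ) < 1 + z ^ 2 := by positivity
  intro c c' hc
  have hV : c / Real.sqrt (1 + z ^ 2) < c' / Real.sqrt (1 + z ^ 2) :=
    div_lt_div_of_pos_right hc (Real.sqrt_pos.2 hpos)
  have := strictMono_sub_of_contraction hJ1 hΦlip hV
  simp only [fODE]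
  exact mul_lt_mul_of_pos_right (by simpa only [add_lt_add_iff_right] using this)
    (Real.rpow_pos_of_pos hpos _)

def IsODESolutionOn (F u : ℝ → ℝ) (a b : ℝ) : Prop :=
  ∀ x ∈ Ico a b, HasDerivWithinAt u (F (u x)) (Ico a b) x

namespace IsODESolutionOn

variable {F G u v : ℝ → ℝ} {a b : ℝ}

lemma mono {a' b' : ℝ} (h : IsODESolutionOn F u a b) (ha : a ≤ a') (hb : b' ≤ b) :
    IsODESolutionOn F u a' b' := fun x hx =>
  (h x ⟨ha.trans hx.1, hx.2.trans_le hb⟩).mono (Ico_subset_Ico ha hb)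

lemma continuousOn (h : IsODESolutionOn F u a b) : ContinuousOn u (Ico a b) :=
  fun x hx => (h x hx).continuousWithinAt

lemma hasDerivWithinAt_Ici (h : IsODESolutionOn F u a b) {x : ℝ} (hx : x ∈ Ico a b) :
    HasDerivWithinAt u (F (u x)) (Ici x) x :=
  (h x hx).mono_of_mem_nhdsWithin <|
    mem_of_superset (Ico_mem_nhdsGE hx.2) (Ico_subset_Ico_left hx.1)

lemma hasDerivAt (h : IsODESolutionOn F u a b) {x : ℝ} (hx : x ∈ Ioo a b) :
    HasDerivAt u (F (u x)) x :=
  (h x (Ioo_subset_Ico_self hx)).hasDerivAt (Ico_mem_nhds hx.1 hx.2)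

lemma comp_sub_const (h : IsODESolutionOn F u a b) (d : ℝ) :
    IsODESolutionOn F (fun x => u (x - d)) (a + d) (b + d) := by
  intro x hx
  have hx' : x - d ∈ Ico a b := ⟨by linarith [hx.1], by linarith [hx.2]⟩
  have hmaps : MapsTo (fun y => y - d) (Ico (a + d) (b + d)) (Ico a b) :=
    fun y hy => ⟨by linarith [hy.1], by linarith [hy.2]⟩
  simpa [Function.comp_def] using
    (h (x - d) hx').comp x ((hasDerivAt_id x).sub_const d).hasDerivWithinAt hmaps

lemma le_of_rhs_lt (hu : IsODESolutionOn F u a b) (hv : IsODESolutionOn G v a b)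
    (hFG : ∀ z, F z < G z) (ha : u a ≤ v a) : ∀ x ∈ Ico a b, u x ≤ v x := by
  intro x hx
  have hsub : Icc a x ⊆ Ico a b := Icc_subset_Ico_right hx.2
  exact image_le_of_deriv_right_lt_deriv_boundary' (hu.continuousOn.mono hsub)
    (fun y hy => hu.hasDerivWithinAt_Ici (hsub (Ico_subset_Icc_self hy))) ha
    (hv.continuousOn.mono hsub)
    (fun y hy => hv.hasDerivWithinAt_Ici (hsub (Ico_subset_Icc_self hy)))
    (fun y _ hy => hy ▸ hFG (u y)) ⟨hx.1, le_rfl⟩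

/-- Where the solutions touched, `v - u` would have a local minimum with positive derivative. -/
lemma lt_of_rhs_lt (hu : IsODESolutionOn F u a b) (hv : IsODESolutionOn G v a b)
    (hFG : ∀ z, F z < G z) (ha : u a ≤ v a) : ∀ x ∈ Ioo a b, u x < v x := by
  intro x hx
  have hle := hu.le_of_rhs_lt hv hFG ha
  refine (hle x (Ioo_subset_Ico_self hx)).lt_of_ne fun heq => ?_
  have hmin : IsLocalMin (fun y => v y - u y) x :=
    mem_of_superset (Ico_mem_nhds hx.1 hx.2) fun y hy => by
      simpa [heq] using hle y hy
  have hzero := hmin.hasDerivAt_eq_zero ((hv.hasDerivAt hx).sub (hu.hasDerivAt hx))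
  rw [← heq] at hzero
  linarith [hFG (u x)]

end IsODESolutionOn

lemma not_tendsto_atTop_of_le_continuousOn {u v : ℝ → ℝ} {a b : ℝ} (hab : a < b)
    (hv : ContinuousOn v (Icc a b)) (huv : ∀ x ∈ Ico a b, u x ≤ v x) :
    ¬ Tendsto u (𝓝[<] b) atTop := by
  intro hu
  obtain ⟨M, hM⟩ := isCompact_Icc.bddAbove_image hv
  obtain ⟨x, hxM, hx⟩ := ((hu.eventually_gt_atTop M).and (Ioo_mem_nhdsLT hab)).exists
  have := hM (mem_image_of_mem v (Ioo_subset_Icc_self hx))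
  linarith [huv x (Ioo_subset_Ico_self hx)]

theorem stmt16_general (Φ : ℝ → ℝ) (J : ℝ) (hJ1 : J < 1)
    (hΦlip : ∀ a b : ℝ, |Φ a - Φ b| ≤ J * |a - b|)
    (c lam : ℝ) (hc : 0 < c)
    (xB xF : ℝ) (hxF : 0 < xF)
    (wB wF : ℝ → ℝ)
    (hwB : ∀ x ∈ Ico (0:ℝ) xB,
      HasDerivWithinAt wB (fODE Φ c lam (wB x)) (Ico (0:ℝ) xB) x)
    (hB0 : wB 0 = 0)
    (hwF : ∀ x ∈ Ico (0:ℝ) xF,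
      HasDerivWithinAt wF (fODE Φ (-c) lam (wF x)) (Ico (0:ℝ) xF) x)
    (hF0 : wF 0 = 0)
    (hFblow : Tendsto wF (nhdsWithin xF (Iio xF)) atTop) :
    xB < xF := by
  by_contra! hle
  have hB : IsODESolutionOn (fODE Φ c lam) wB 0 xB := hwB
  have hF : IsODESolutionOn (fODE Φ (-c) lam) wF 0 xF := hwF
  have hFB : ∀ z, fODE Φ (-c) lam z < fODE Φ c lam z := fun z =>
    strictMono_fODE hJ1 hΦlip lam z (neg_lt_self hc)
  obtain ⟨x₁, hwF₁, hx₁⟩ := ((hFblow.eventually_gt_atTop 0).and (Ioo_mem_nhdsLT hxF)).exists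
  have hlt : wF x₁ < wB x₁ :=
    hF.lt_of_rhs_lt (hB.mono le_rfl hle) hFB (by rw [hF0, hB0]) x₁ hx₁
  obtain ⟨x₂, ⟨hx₂0, hx₂₁⟩, hwB₂⟩ := intermediate_value_Ico hx₁.1.le
    (hB.continuousOn.mono (Icc_subset_Ico_right (hx₁.2.trans_le hle)))
    ⟨by rw [hB0]; exact hwF₁.le, hlt⟩
  have hv := hB.comp_sub_const (x₁ - x₂)
  have hcmp : ∀ x ∈ Ico x₁ xF, wF x ≤ wB (x - (x₁ - x₂)) :=
    (hF.mono hx₁.1.le le_rfl).le_of_rhs_lt (hv.mono (by linarith) (by linarith)) hFB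
      (by simp [hwB₂])
  exact not_tendsto_atTop_of_le_continuousOn hx₁.2
    (hv.continuousOn.mono (Icc_subset_Ico (by linarith) (by linarith))) hcmp hFblow

/-- comparison of blow-up times. If w_B solves w′ = f_λ^c(w),
w(0) = 0 and blows up to +∞ at x_B* < ∞, while w_F solves w′ = f_λ^{−c}(w),
w(0) = 0 and blows up to +∞ at x_F* < ∞ (c > 0), then x_F* > x_B*. -/
theorem stmt16 (Φ : ℝ → ℝ) (J : ℝ) (hJ0 : 0 ≤ J) (hJ1 : J < 1)
    (hΦlip : ∀ a b : ℝ, |Φ a - Φ b| ≤ J * |a - b|)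
    (hΦbd : ∃ B : ℝ, ∀ x : ℝ, |Φ x| ≤ B)
    (c lam : ℝ) (hc : 0 < c)
    (xB xF : ℝ) (hxB : 0 < xB) (hxF : 0 < xF)
    (wB wF : ℝ → ℝ)
    (hwB : ∀ x ∈ Ico (0:ℝ) xB,
      HasDerivWithinAt wB (fODE Φ c lam (wB x)) (Ico (0:ℝ) xB) x)
    (hB0 : wB 0 = 0)
    (hBblow : Tendsto wB (nhdsWithin xB (Iio xB)) atTop)
    (hwF : ∀ x ∈ Ico (0:ℝ) xF,
      HasDerivWithinAt wF (fODE Φ (-c) lam (wF x)) (Ico (0:ℝ) xF) x)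
    (hF0 : wF 0 = 0)
    (hFblow : Tendsto wF (nhdsWithin xF (Iio xF)) atTop) :
    xB < xF :=
  stmt16_general Φ J hJ1 hΦlip c lam hc xB xF hxF wB wF hwB hB0 hwF hF0 hFblow
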